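/- arXiv:1401.5114 — 5 statements merged into one kernel-verified Lean document; each statement's English description precedes it below -/
import Mathlib

section
/- Let D be a commutative ring. Suppose that to each s ∈ E_d there is assigned a monic cubic polynomial p_s(x) = x³ + c_{s,2}x² + c_{s,1}x + c_{s,0} ∈ D[x] whose constant term c_{s,0} is invertible in D, and let A = D F_d / ⟨p_s(s) : s ∈ E_d⟩ be the quotient of the group algebra D F_d by the two-sided ideal generated by the elements p_s(s) for s ∈ E_d. Then A is spanned as a D-module by the image of M_d; that is, the D-linear span of the image of M_d under the quotient map D F_d → A is all of A. -/
open scoped Pointwise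

/-- The generator `y_{i+1}` of the free group of rank `d` (0-indexed: `ygen d i` for
`i < d`; junk value `1` otherwise). -/
def ygen (d : ℕ) (i : ℕ) : FreeGroup (Fin d) :=
  if h : i < d then FreeGroup.of ⟨i, h⟩ else 1

/-- The pair of recursively defined subsets `(E_{s+1}, M_{s+1})` of the free group of
rank `d` (0-indexed, so `EM d s` is the paper's `(E_{s+1}, M_{s+1})`):
`E₁ = {y₁}`, `M₁ = {e, y₁, y₁⁻¹}`, and
`E_{s+1} = E_s ∪ M_s·y_{s+1}^{±1}`,
`M_{s+1} = M_s ∪ M_s·y_{s+1}^{±1}·M_s ∪ M_s·y_{s+1}⁻¹·(M_s \ {e})·y_{s+1}·M_s`. -/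
def EM (d : ℕ) : ℕ → Set (FreeGroup (Fin d)) × Set (FreeGroup (Fin d))
  | 0 => ({ygen d 0}, {1, ygen d 0, (ygen d 0)⁻¹})
  | s + 1 =>
      let E := (EM d s).1
      let M := (EM d s).2
      (E ∪ M * {ygen d (s + 1), (ygen d (s + 1))⁻¹},
        M ∪ M * {ygen d (s + 1), (ygen d (s + 1))⁻¹} * M ∪
          M * {(ygen d (s + 1))⁻¹} * (M \ {1}) * {ygen d (s + 1)} * M)

/-- The relation imposing on each `s ∈ E_d` the monic cubic polynomial condition
`s³ + c₂(s)·s² + c₁(s)·s + c₀(s) = 0` in the group algebra `D F_d`. -/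
def cubicRel (D : Type*) [CommRing D] (d : ℕ) (c2 c1 c0 : FreeGroup (Fin d) → D)
    (p q : MonoidAlgebra D (FreeGroup (Fin d))) : Prop :=
  ∃ s ∈ (EM d (d - 1)).1,
    p = (MonoidAlgebra.of D (FreeGroup (Fin d)) s) ^ 3 +
          c2 s • (MonoidAlgebra.of D (FreeGroup (Fin d)) s) ^ 2 +
          c1 s • MonoidAlgebra.of D (FreeGroup (Fin d)) s + c0 s • 1 ∧
      q = 0

/-!
Write `N_s ⊆ A` for the `D`-span of the image of `M_s`. We show by induction on `s` that
`N_s · N_s ⊆ N_s`; since `N_d` contains `1` and the generators of `F_d` together with their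
inverses, it is then a subalgebra containing the image of `F_d`, hence all of `A`. The recursion
for `M_{s+1}` also produces `M_1` from `M_0 = {e}`, so the base case is a step as well.

For the step put `N = N_s`, `Y = D·y` and `Y' = D·y⁻¹` with `y = y_{s+1}`. In the idempotent
semiring of submodules, `N_{s+1} = N + N Y N + N Y' N + N Y' N Y N`, and this is closed under
multiplication once `Y N Y ≤ N Y' N + Y N + N`, `Y' N Y' ≤ N Y N + N + Y'` and
`Y' ≤ Y Y + Y + 1`. These bounds come from the cubic relations of the elements `t = m y ∈ E_d`
with `m ∈ M_s`: the relation gives `t² ∈ D t⁻¹ + D t + D`, and, as its constant term is a unit,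
`t⁻¹ ∈ D t² + D t + D`. For `b, c ∈ M_s` one then writes `y b y = b⁻¹ (b y)²` and
`y⁻¹ c y⁻¹ = (c⁻¹ y)⁻¹ y⁻¹`.
-/

section IdemSemiring
variable {S : Type*} [IdemSemiring S] {N Y Y' : S}

def nextLayer (N Y Y' : S) : S := N + N * Y * N + N * Y' * N + N * Y' * N * Y * N

theorem nextLayer_eq_mul_left (N Y Y' : S) :
    nextLayer N Y Y' = N * (1 + Y * N + Y' * N + Y' * N * Y * N) := by
  simp only [nextLayer, mul_add, mul_one, mul_assoc]

theorem nextLayer_eq_mul_right (N Y Y' : S) :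
    nextLayer N Y Y' = (1 + N * Y + N * Y' + N * Y' * N * Y) * N := by
  simp only [nextLayer, add_mul, one_mul]

theorem le_nextLayer : N ≤ nextLayer N Y Y' := le_add_right (le_add_right le_self_add)

theorem mul_mul_le_nextLayer : N * Y * N ≤ nextLayer N Y Y' :=
  le_add_right (le_add_right le_add_self)

theorem mul_inv_mul_le_nextLayer : N * Y' * N ≤ nextLayer N Y Y' := le_add_right le_add_self

theorem mul_nextLayer_le (hN : N * N ≤ N) : N * nextLayer N Y Y' ≤ nextLayer N Y Y' := by
  rw [nextLayer_eq_mul_left, ← mul_assoc]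
  gcongr

theorem nextLayer_mul_le (hN : N * N ≤ N) : nextLayer N Y Y' * N ≤ nextLayer N Y Y' := by
  rw [nextLayer_eq_mul_right, mul_assoc]
  gcongr

theorem mul_mul_le_nextLayer_of_le {X : S} (hN : N * N ≤ N) (h : X ≤ nextLayer N Y Y') :
    N * X * N ≤ nextLayer N Y Y' :=
  calc N * X * N ≤ N * nextLayer N Y Y' * N := by gcongr
    _ ≤ nextLayer N Y Y' := (nextLayer_mul_le hN).trans' (by gcongr; exact mul_nextLayer_le hN)

theorem nextLayer_mul_gen_le (h1 : 1 ≤ N) (hN : N * N ≤ N)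
    (hYNY : Y * N * Y ≤ N * Y' * N + Y * N + N)
    (hY'NY' : Y' * N * Y' ≤ N * Y * N + N + Y') :
    nextLayer N Y Y' * Y ≤ nextLayer N Y Y' := by
  have hNYNY : N * Y * N * Y ≤ N * Y' * N + N * Y * N + N :=
    calc N * Y * N * Y = N * (Y * N * Y) := by simp only [mul_assoc]
      _ ≤ N * (N * Y' * N + Y * N + N) := by gcongr
      _ = N * N * Y' * N + N * Y * N + N * N := by simp only [mul_add, mul_assoc]
      _ ≤ N * Y' * N + N * Y * N + N := by gcongr
  have hY' : Y' ≤ nextLayer N Y Y' :=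
    calc Y' = 1 * Y' * 1 := by simp only [mul_one, one_mul]
      _ ≤ N * Y' * N := by gcongr
      _ ≤ nextLayer N Y Y' := mul_inv_mul_le_nextLayer
  have hNY'NY'N : N * Y' * N * Y' * N ≤ nextLayer N Y Y' := by
    rw [mul_assoc N Y' N, mul_assoc N (Y' * N)]
    exact mul_mul_le_nextLayer_of_le hN
      (hY'NY'.trans (add_le (add_le mul_mul_le_nextLayer le_nextLayer) hY'))
  simp only [nextLayer, add_mul]
  refine add_le (add_le (add_le ?_ ?_) ?_) ?_
  · exact (le_mul_of_one_le_right' h1).trans mul_mul_le_nextLayer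
  · exact hNYNY.trans (add_le (add_le mul_inv_mul_le_nextLayer mul_mul_le_nextLayer) le_nextLayer)
  · exact (le_mul_of_one_le_right' h1).trans le_add_self
  · calc N * Y' * N * Y * N * Y = N * Y' * (N * Y * N * Y) := by simp only [mul_assoc]
      _ ≤ N * Y' * (N * Y' * N + N * Y * N + N) := by gcongr
      _ = N * Y' * N * Y' * N + N * Y' * N * Y * N + N * Y' * N := by
        simp only [mul_add, mul_assoc]
      _ ≤ nextLayer N Y Y' := add_le (add_le hNY'NY'N le_add_self) mul_inv_mul_le_nextLayer

theorem nextLayer_mul_gen_inv_le (h1 : 1 ≤ N) (hN : N * N ≤ N)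
    (hYNY : Y * N * Y ≤ N * Y' * N + Y * N + N)
    (hY'NY' : Y' * N * Y' ≤ N * Y * N + N + Y') (hY' : Y' ≤ Y * Y + Y + 1) :
    nextLayer N Y Y' * Y' ≤ nextLayer N Y Y' := by
  have hY := nextLayer_mul_gen_le h1 hN hYNY hY'NY'
  calc nextLayer N Y Y' * Y' ≤ nextLayer N Y Y' * (Y * Y + Y + 1) := by gcongr
    _ = nextLayer N Y Y' * Y * Y + nextLayer N Y Y' * Y + nextLayer N Y Y' := by
      simp only [mul_add, mul_one, mul_assoc]
    _ ≤ nextLayer N Y Y' := add_le (add_le ((mul_le_mul_left hY Y).trans hY) hY) le_rfl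

theorem nextLayer_mul_self_le (h1 : 1 ≤ N) (hN : N * N ≤ N)
    (hYNY : Y * N * Y ≤ N * Y' * N + Y * N + N)
    (hY'NY' : Y' * N * Y' ≤ N * Y * N + N + Y') (hY' : Y' ≤ Y * Y + Y + 1) :
    nextLayer N Y Y' * nextLayer N Y Y' ≤ nextLayer N Y Y' := by
  have hN' := nextLayer_mul_le (Y := Y) (Y' := Y') hN
  have hY := nextLayer_mul_gen_le h1 hN hYNY hY'NY'
  have hY'' := nextLayer_mul_gen_inv_le h1 hN hYNY hY'NY' hY'
  conv_lhs => arg 2; rw [nextLayer]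
  simp only [mul_add, ← mul_assoc]
  refine add_le (add_le (add_le hN' ?_) ?_) ?_
  · grw [hN', hY, hN']
  · grw [hN', hY'', hN']
  · grw [hN', hY'', hN', hY, hN']

end IdemSemiring

open Submodule

section Cubic
variable (D : Type*) {A : Type*} [CommRing D] [Ring A] [Algebra D A]

def SatisfiesUnitCubic (x : A) : Prop :=
  ∃ c₂ c₁ c₀ : D, IsUnit c₀ ∧ x ^ 3 + c₂ • x ^ 2 + c₁ • x + c₀ • 1 = 0

variable {D} {x y : A}

theorem SatisfiesUnitCubic.exists_quadratic (hx : SatisfiesUnitCubic D x) (hxy : x * y = 1) :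
    ∃ c₂ c₁ c₀ : D, IsUnit c₀ ∧ x * x + c₂ • x + c₁ • 1 + c₀ • y = 0 := by
  obtain ⟨c₂, c₁, c₀, hc₀, h⟩ := hx
  refine ⟨c₂, c₁, c₀, hc₀, ?_⟩
  have := congrArg (· * y) h
  simpa only [add_mul, smul_mul_assoc, pow_succ, pow_zero, one_mul, mul_assoc, hxy, mul_one,
    zero_mul] using this

theorem SatisfiesUnitCubic.span_mul_self_le (hx : SatisfiesUnitCubic D x) (hxy : x * y = 1) :
    span D {x * x} ≤ span D {y} ⊔ span D {x} ⊔ 1 := by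
  obtain ⟨c₂, c₁, c₀, -, h⟩ := hx.exists_quadratic hxy
  have hxx : x * x = -(c₀ • y) - c₂ • x - c₁ • 1 := by rw [← sub_eq_zero, ← h]; abel
  rw [span_singleton_le_iff_mem, one_eq_span, sup_assoc, ← span_insert, ← span_insert, hxx]
  exact sub_mem (sub_mem (neg_mem (smul_mem _ _ (subset_span (by simp))))
    (smul_mem _ _ (subset_span (by simp)))) (smul_mem _ _ (subset_span (by simp)))

theorem SatisfiesUnitCubic.span_inv_le (hx : SatisfiesUnitCubic D x) (hxy : x * y = 1) :
    span D {y} ≤ span D {x * x} ⊔ span D {x} ⊔ 1 := by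
  obtain ⟨c₂, c₁, c₀, hc₀, h⟩ := hx.exists_quadratic hxy
  have hy : y = (↑hc₀.unit⁻¹ : D) • -(x * x + c₂ • x + c₁ • 1) := by
    rw [← eq_neg_of_add_eq_zero_right h, smul_smul, IsUnit.val_inv_mul, one_smul]
  rw [span_singleton_le_iff_mem, one_eq_span, sup_assoc, ← span_insert, ← span_insert, hy]
  exact smul_mem _ _ (neg_mem (add_mem (add_mem (subset_span (by simp))
    (smul_mem _ _ (subset_span (by simp)))) (smul_mem _ _ (subset_span (by simp)))))

end Cubic

section NextSet
variable {G : Type*} [Group G] {M : Set G} {y : G}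

def nextSet (M : Set G) (y : G) : Set G :=
  M ∪ M * {y, y⁻¹} * M ∪ M * {y⁻¹} * (M \ {1}) * {y} * M

theorem subset_nextSet : M ⊆ nextSet M y := fun _ hm => Or.inl (Or.inl hm)

theorem mem_nextSet_self (h1 : 1 ∈ M) : y ∈ nextSet M y :=
  Or.inl (Or.inr ⟨y, ⟨1, h1, y, Or.inl rfl, one_mul y⟩, 1, h1, mul_one y⟩)

theorem nextSet_inv (hM : M⁻¹ = M) : (nextSet M y)⁻¹ = nextSet M y := by
  have hM' : (M \ {1})⁻¹ = M \ {1} := by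
    rw [← Set.image_inv_eq_inv, Set.image_sdiff inv_injective]
    simp [hM]
  simp only [nextSet, Set.union_inv, mul_inv_rev, hM, hM', Set.inv_insert, Set.inv_singleton,
    inv_inv, mul_assoc, Set.pair_comm]

end NextSet

section Span
variable {G : Type*} [Group G] {M : Set G} {y : G}
variable {D A : Type*} [CommRing D] [Ring A] [Algebra D A] (ι : G →* A)

variable (D) in
noncomputable def singletonSpan : G →* Submodule D A := (spanSingleton D).toMonoidHom.comp ι

theorem singletonSpan_apply (g : G) : singletonSpan D ι g = span D {ι g} := rfl

theorem span_image_eq_iSup (M : Set G) : span D (ι '' M) = ⨆ m ∈ M, singletonSpan D ι m := by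
  rw [span_eq_iSup_of_singleton_spans, iSup_image]
  rfl

theorem singletonSpan_mul_span_image_mul_le {p q : G} {X : Submodule D A}
    (h : ∀ m ∈ M, singletonSpan D ι (p * m * q) ≤ X) :
    singletonSpan D ι p * span D (ι '' M) * singletonSpan D ι q ≤ X := by
  simpa only [span_image_eq_iSup, mul_iSup, iSup_mul, iSup₂_le_iff, ← map_mul] using h

theorem singletonSpan_le_span_image {m : G} (hm : m ∈ M) :
    singletonSpan D ι m ≤ span D (ι '' M) :=
  span_mono (Set.singleton_subset_iff.2 (Set.mem_image_of_mem ι hm))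

theorem one_le_span_image (h1 : 1 ∈ M) : 1 ≤ span D (ι '' M) :=
  (map_one (singletonSpan D ι)).symm.trans_le (singletonSpan_le_span_image ι h1)

theorem singletonSpan_mul_self_le {t : G} (ht : SatisfiesUnitCubic D (ι t)) :
    singletonSpan D ι t * singletonSpan D ι t ≤
      singletonSpan D ι t⁻¹ ⊔ singletonSpan D ι t ⊔ 1 := by
  rw [← map_mul (singletonSpan D ι), singletonSpan_apply _ (t * t), map_mul]
  exact ht.span_mul_self_le (by rw [← map_mul, mul_inv_cancel, map_one])

theorem singletonSpan_inv_le {t : G} (ht : SatisfiesUnitCubic D (ι t)) :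
    singletonSpan D ι t⁻¹ ≤
      singletonSpan D ι t * singletonSpan D ι t ⊔ singletonSpan D ι t ⊔ 1 := by
  rw [← map_mul (singletonSpan D ι), singletonSpan_apply _ (t * t), map_mul]
  exact ht.span_inv_le (by rw [← map_mul, mul_inv_cancel, map_one])

theorem span_image_nextSet (h1 : 1 ∈ M)
    (hN : span D (ι '' M) * span D (ι '' M) ≤ span D (ι '' M)) :
    span D (ι '' nextSet M y) =
      nextLayer (span D (ι '' M)) (singletonSpan D ι y) (singletonSpan D ι y⁻¹) := by
  have hN1 : span D (ι '' M) = span D (ι '' (M \ {1})) ⊔ 1 := by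
    conv_lhs => rw [← Set.sdiff_union_of_subset (Set.singleton_subset_iff.2 h1)]
    rw [Set.image_union, span_union, Set.image_singleton, map_one, one_eq_span]
  have hY'Y : singletonSpan D ι y⁻¹ * singletonSpan D ι y = 1 := by
    rw [← map_mul, inv_mul_cancel, map_one]
  simp only [nextSet, Set.image_union, Set.image_mul, span_union, ← span_mul_span,
    Set.image_insert_eq, Set.image_singleton, span_insert, ← singletonSpan_apply]
  set N := span D (ι '' M)
  set Y := singletonSpan D ι y
  set Y' := singletonSpan D ι y⁻¹
  -- `M \ {1}` may be replaced by `M`, because `y⁻¹ · 1 · y = 1`.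
  have hlast : N * Y' * N * Y * N = N * Y' * span D (ι '' (M \ {1})) * Y * N ⊔ N * N :=
    calc N * Y' * N * Y * N = N * Y' * (span D (ι '' (M \ {1})) ⊔ 1) * Y * N := by rw [← hN1]
      _ = N * Y' * span D (ι '' (M \ {1})) * Y * N ⊔ N * N := by
        rw [Submodule.mul_sup, mul_one, Submodule.sup_mul, Submodule.sup_mul, mul_assoc N Y' Y,
          hY'Y, mul_one]
  rw [nextLayer, hlast, Submodule.mul_sup, Submodule.sup_mul]
  simp only [Submodule.add_eq_sup]
  order

theorem gen_mul_span_image_mul_gen_le (h1 : 1 ∈ M) (hM : M⁻¹ = M)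
    (hy : ∀ m ∈ M, SatisfiesUnitCubic D (ι (m * y))) :
    singletonSpan D ι y * span D (ι '' M) * singletonSpan D ι y ≤
      span D (ι '' M) * singletonSpan D ι y⁻¹ * span D (ι '' M) ⊔
        singletonSpan D ι y * span D (ι '' M) ⊔ span D (ι '' M) := by
  refine singletonSpan_mul_span_image_mul_le ι fun b hb => ?_
  have hb' : singletonSpan D ι b⁻¹ ≤ span D (ι '' M) :=
    singletonSpan_le_span_image ι (hM ▸ Set.inv_mem_inv.2 hb)
  calc singletonSpan D ι (y * b * y)
      = singletonSpan D ι b⁻¹ * (singletonSpan D ι (b * y) * singletonSpan D ι (b * y)) := by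
        simp only [← map_mul]; group
    _ ≤ singletonSpan D ι b⁻¹ *
          (singletonSpan D ι (b * y)⁻¹ ⊔ singletonSpan D ι (b * y) ⊔ 1) := by
        gcongr; exact singletonSpan_mul_self_le ι (hy b hb)
    _ = singletonSpan D ι b⁻¹ * singletonSpan D ι y⁻¹ * singletonSpan D ι b⁻¹ ⊔
          singletonSpan D ι y * 1 ⊔ singletonSpan D ι b⁻¹ := by
        simp only [Submodule.mul_sup, mul_one, ← map_mul]; congr 3 <;> group
    _ ≤ _ := by gcongr; exact one_le_span_image ι h1

theorem gen_inv_mul_span_image_mul_gen_inv_le (hM : M⁻¹ = M)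
    (hy : ∀ m ∈ M, SatisfiesUnitCubic D (ι (m * y))) :
    singletonSpan D ι y⁻¹ * span D (ι '' M) * singletonSpan D ι y⁻¹ ≤
      span D (ι '' M) * singletonSpan D ι y * span D (ι '' M) ⊔ span D (ι '' M) ⊔
        singletonSpan D ι y⁻¹ := by
  refine singletonSpan_mul_span_image_mul_le ι fun c hc => ?_
  have hc' : c⁻¹ ∈ M := hM ▸ Set.inv_mem_inv.2 hc
  calc singletonSpan D ι (y⁻¹ * c * y⁻¹)
      = singletonSpan D ι (c⁻¹ * y)⁻¹ * singletonSpan D ι y⁻¹ := by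
        simp only [← map_mul]; group
    _ ≤ (singletonSpan D ι (c⁻¹ * y) * singletonSpan D ι (c⁻¹ * y) ⊔
          singletonSpan D ι (c⁻¹ * y) ⊔ 1) * singletonSpan D ι y⁻¹ := by
        gcongr; exact singletonSpan_inv_le ι (hy _ hc')
    _ = singletonSpan D ι c⁻¹ * singletonSpan D ι y * singletonSpan D ι c⁻¹ ⊔
          singletonSpan D ι c⁻¹ ⊔ singletonSpan D ι y⁻¹ := by
        simp only [Submodule.sup_mul, one_mul, ← map_mul]; congr 3 <;> group
    _ ≤ _ := by gcongr <;> exact singletonSpan_le_span_image ι hc'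

theorem span_image_nextSet_mul_self_le (h1 : 1 ∈ M) (hM : M⁻¹ = M)
    (hN : span D (ι '' M) * span D (ι '' M) ≤ span D (ι '' M))
    (hy : ∀ m ∈ M, SatisfiesUnitCubic D (ι (m * y))) :
    span D (ι '' nextSet M y) * span D (ι '' nextSet M y) ≤ span D (ι '' nextSet M y) := by
  have hY' := singletonSpan_inv_le ι (hy 1 h1)
  rw [one_mul] at hY'
  rw [span_image_nextSet ι h1 hN]
  exact nextLayer_mul_self_le (one_le_span_image ι h1) hN
    (gen_mul_span_image_mul_gen_le ι h1 hM hy) (gen_inv_mul_span_image_mul_gen_inv_le ι hM hy) hY'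

end Span

section FreeGroupSets
variable {d : ℕ}

theorem EM_zero_snd : (EM d 0).2 = nextSet {1} (ygen d 0) := by
  simp only [EM, nextSet]
  simp
  rw [Set.insert_comm, Set.pair_comm]

theorem EM_succ_snd (s : ℕ) : (EM d (s + 1)).2 = nextSet (EM d s).2 (ygen d (s + 1)) := rfl

theorem one_mem_EM_snd : ∀ s, (1 : FreeGroup (Fin d)) ∈ (EM d s).2
  | 0 => Or.inl rfl
  | s + 1 => subset_nextSet (one_mem_EM_snd s)

theorem EM_snd_inv : ∀ s, (EM d s).2⁻¹ = (EM d s).2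
  | 0 => by rw [EM_zero_snd]; exact nextSet_inv (by simp)
  | s + 1 => nextSet_inv (EM_snd_inv s)

theorem EM_snd_mono : Monotone fun s => (EM d s).2 :=
  monotone_nat_of_le_succ fun _ => subset_nextSet

theorem EM_fst_mono : Monotone fun s => (EM d s).1 :=
  monotone_nat_of_le_succ fun _ _ h => Or.inl h

theorem mul_gen_mem_EM_fst {s : ℕ} {m : FreeGroup (Fin d)} (hm : m ∈ (EM d s).2) :
    m * ygen d (s + 1) ∈ (EM d (s + 1)).1 :=
  Or.inr (Set.mul_mem_mul hm (Or.inl rfl))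

theorem gen_mem_EM_snd {j s : ℕ} (hjs : j ≤ s) : ygen d j ∈ (EM d s).2 := by
  refine EM_snd_mono hjs ?_
  cases j with
  | zero => show _ ∈ (EM d 0).2; rw [EM_zero_snd]; exact mem_nextSet_self rfl
  | succ j => exact mem_nextSet_self (one_mem_EM_snd j)

end FreeGroupSets

section Quotient
variable {D A : Type*} [CommRing D] [Ring A] [Algebra D A] {d : ℕ} (ι : FreeGroup (Fin d) →* A)

theorem span_image_EM_mul_self_le (hι : ∀ t ∈ (EM d (d - 1)).1, SatisfiesUnitCubic D (ι t)) :
    ∀ s ≤ d - 1,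
      span D (ι '' (EM d s).2) * span D (ι '' (EM d s).2) ≤ span D (ι '' (EM d s).2)
  | 0, _ => by
    rw [EM_zero_snd]
    refine span_image_nextSet_mul_self_le ι rfl (by simp) ?_ ?_
    · rw [Set.image_singleton, map_one, ← one_eq_span, one_mul]
    · rintro m rfl
      exact hι _ (EM_fst_mono (Nat.zero_le _) (one_mul (ygen d 0)))
  | s + 1, hs => by
    rw [EM_succ_snd]
    exact span_image_nextSet_mul_self_le ι (one_mem_EM_snd s) (EM_snd_inv s)
      (span_image_EM_mul_self_le hι s (by omega))
      fun _ hm => hι _ (EM_fst_mono hs (mul_gen_mem_EM_fst hm))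

theorem mem_span_image_EM (hι : ∀ t ∈ (EM d (d - 1)).1, SatisfiesUnitCubic D (ι t))
    (g : FreeGroup (Fin d)) : ι g ∈ span D (ι '' (EM d (d - 1)).2) := by
  have hN := span_image_EM_mul_self_le ι hι (d - 1) le_rfl
  have hgen (a : Fin d) : FreeGroup.of a ∈ (EM d (d - 1)).2 := by
    simpa [ygen] using gen_mem_EM_snd (d := d) (Nat.le_pred_of_lt a.isLt)
  induction g using FreeGroup.induction_on with
  | C1 => rw [map_one]; exact one_le.1 (one_le_span_image ι (one_mem_EM_snd _))
  | of a => exact subset_span (Set.mem_image_of_mem ι (hgen a))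
  | inv_of a _ =>
    exact subset_span (Set.mem_image_of_mem ι (EM_snd_inv _ ▸ Set.inv_mem_inv.2 (hgen a)))
  | mul g h hg hh => rw [map_mul]; exact hN (mul_mem_mul hg hh)

end Quotient

theorem MonoidAlgebra.submodule_eq_top_of_forall_of_mem {D G B : Type*} [CommRing D] [Monoid G]
    [Semiring B] [Algebra D B] {f : MonoidAlgebra D G →ₐ[D] B} (hf : Function.Surjective f)
    {N : Submodule D B} (h : ∀ g, f (MonoidAlgebra.of D G g) ∈ N) : N = ⊤ := by
  rw [eq_top_iff]
  rintro b -
  obtain ⟨p, rfl⟩ := hf b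
  induction p using MonoidAlgebra.induction_on with
  | of g => exact h g
  | add p q hp hq => rw [map_add]; exact add_mem hp hq
  | smul r p hp => rw [map_smul]; exact smul_mem _ r hp

theorem span_of_Md_general (D : Type*) [CommRing D] (d : ℕ)
    (c2 c1 c0 : FreeGroup (Fin d) → D)
    (hc0 : ∀ s ∈ (EM d (d - 1)).1, IsUnit (c0 s)) :
    Submodule.span D
        ((fun m => RingQuot.mkAlgHom D (cubicRel D d c2 c1 c0)
            (MonoidAlgebra.of D (FreeGroup (Fin d)) m)) '' (EM d (d - 1)).2) = ⊤ := by
  let ι := (RingQuot.mkAlgHom D (cubicRel D d c2 c1 c0)).toMonoidHom.comp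
    (MonoidAlgebra.of D (FreeGroup (Fin d)))
  have hι (t) (ht : t ∈ (EM d (d - 1)).1) : SatisfiesUnitCubic D (ι t) := by
    have h := RingQuot.mkAlgHom_rel D (show cubicRel D d c2 c1 c0 _ 0 from ⟨t, ht, rfl, rfl⟩)
    simp only [map_add, map_smul, map_pow, map_zero, map_one] at h
    exact ⟨c2 t, c1 t, c0 t, hc0 t ht, h⟩
  exact MonoidAlgebra.submodule_eq_top_of_forall_of_mem (RingQuot.mkAlgHom_surjective D _)
    (mem_span_image_EM ι hι)

/-- Let `D` be a commutative ring and suppose each `s ∈ E_d` is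
assigned a monic cubic polynomial `p_s(x) = x³ + c₂(s)x² + c₁(s)x + c₀(s) ∈ D[x]`
with invertible constant term.  Then the quotient `A = D F_d / ⟨p_s(s) : s ∈ E_d⟩`
of the group algebra is spanned as a `D`-module by the image of `M_d`. -/
theorem span_of_Md (D : Type*) [CommRing D] (d : ℕ) (hd : 1 ≤ d)
    (c2 c1 c0 : FreeGroup (Fin d) → D)
    (hc0 : ∀ s ∈ (EM d (d - 1)).1, IsUnit (c0 s)) :
    Submodule.span D
        ((fun m => RingQuot.mkAlgHom D (cubicRel D d c2 c1 c0)
            (MonoidAlgebra.of D (FreeGroup (Fin d)) m)) '' (EM d (d - 1)).2) = ⊤ :=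
  span_of_Md_general D d c2 c1 c0 hc0
end

section
/- Each matrix a_{i,d} is invertible over ℤ, and for 2 ≤ i ≤ d one has a_{i,d} + a_{i,d}⁻¹ = 2·I_{2^d}. Moreover (a_{i,d} − I_{2^d})² = 0 for all 1 ≤ i ≤ d, and (a_{i,d}·a_{j,d} − I_{2^d})² = 0 for all 1 ≤ i < j ≤ d. -/
/-!
Every `a_{i,d}` satisfies `(a - 1)² = 0`, so its inverse is `2 - a`; this gives invertibility and
`a + a⁻¹ = 2`. Since `am d 0 = 1`, the recursion reads uniformly
`a_{i+1,d+1} = [[b, 0], [b, 2 - b]]` with `b = a_{i,d}` (also for `i = 0`), and a block computation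
shows that this shape preserves both square-zero conditions. For products,
`[[b, 0], [b, 2 - b]] · [[c, 0], [c, 2 - c]] = [[bc, 0], [2c, 2 - cb]]`, and `cb` is conjugate to
`bc`, so `(cb - 1)² = 0` as well.
-/

/-- The equivalence `Fin (2^d) ⊕ Fin (2^d) ≃ Fin (2^(d+1))` used to realize `2 × 2`
block matrices of size `2^d` as matrices of size `2^(d+1)`. -/
def blockEquiv (d : ℕ) : (Fin (2 ^ d) ⊕ Fin (2 ^ d)) ≃ Fin (2 ^ (d + 1)) :=
  finSumFinEquiv.trans (finCongr (by rw [pow_succ]; omega))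

/-- The matrices `a_{i,d} ∈ M(2^d, ℤ)` (here `am d i` for `1 ≤ i ≤ d`), defined
recursively in `2 × 2` block form (blocks of size `2^(d-1)`):
`a_{1,d} = [[I, 0], [I, I]]` and, for `2 ≤ i ≤ d`,
`a_{i,d} = [[a_{i-1,d-1}, 0], [a_{i-1,d-1}, (a_{i-1,d-1})⁻¹]]`.
(The values for `i = 0` or `i > d` are irrelevant junk.) -/
noncomputable def am : (d : ℕ) → ℕ → Matrix (Fin (2 ^ d)) (Fin (2 ^ d)) ℤ
  | 0, _ => 1
  | _ + 1, 0 => 1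
  | d + 1, 1 =>
      Matrix.reindex (blockEquiv d) (blockEquiv d) (Matrix.fromBlocks 1 0 1 1)
  | d + 1, i + 2 =>
      Matrix.reindex (blockEquiv d) (blockEquiv d)
        (Matrix.fromBlocks (am d (i + 1)) 0 (am d (i + 1)) (am d (i + 1))⁻¹)

section Ring
variable {R : Type*} [Ring R] {b c : R}

theorem mul_two_sub_eq_one_of_sub_one_sq_eq_zero (hb : (b - 1) ^ 2 = 0) : b * (2 - b) = 1 := by
  rw [← sub_eq_zero, ← neg_eq_zero, ← hb]; noncomm_ring

theorem two_sub_mul_eq_one_of_sub_one_sq_eq_zero (hb : (b - 1) ^ 2 = 0) : (2 - b) * b = 1 := by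
  rw [← sub_eq_zero, ← neg_eq_zero, ← hb]; noncomm_ring

/-- `c * b` is the conjugate `b⁻¹ (b * c) b`, with `b⁻¹ = 2 - b`. -/
theorem mul_swap_sub_one_sq_eq_zero (hb : (b - 1) ^ 2 = 0) (hbc : (b * c - 1) ^ 2 = 0) :
    (c * b - 1) ^ 2 = 0 := by
  have hconj : c * b - 1 = (2 - b) * (b * c - 1) * b := by
    calc c * b - 1 = ((2 - b) * b) * c * b - (2 - b) * b := by
          rw [two_sub_mul_eq_one_of_sub_one_sq_eq_zero hb, one_mul]
      _ = (2 - b) * (b * c - 1) * b := by noncomm_ring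
  calc (c * b - 1) ^ 2 = (2 - b) * (b * c - 1) * (b * (2 - b)) * (b * c - 1) * b := by
        rw [hconj]; noncomm_ring
    _ = 0 := by
        rw [mul_two_sub_eq_one_of_sub_one_sq_eq_zero hb, mul_one, mul_assoc (2 - b), ← sq, hbc,
          mul_zero, zero_mul]

end Ring

namespace Matrix
variable {n α : Type*} [Fintype n] [DecidableEq n]

theorem inv_eq_two_sub_of_sub_one_sq_eq_zero {R : Type*} [CommRing R] {M : Matrix n n R}
    (hM : (M - 1) ^ 2 = 0) : M⁻¹ = 2 - M :=
  inv_eq_right_inv (mul_two_sub_eq_one_of_sub_one_sq_eq_zero hM)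

variable [Ring α]

theorem fromBlocks_zero_sub_one_sq (A C D : Matrix n n α) :
    (fromBlocks A 0 C D - 1) ^ 2 =
      fromBlocks ((A - 1) ^ 2) 0 (C * (A - 1) + (D - 1) * C) ((D - 1) ^ 2) := by
  rw [← fromBlocks_one, sub_eq_add_neg, fromBlocks_neg, fromBlocks_add, sq, fromBlocks_multiply]
  simp [sq, sub_eq_add_neg]

/-- The recursion's block `[[b, 0], [b, b⁻¹]]` for `(b - 1)² = 0`, where `b⁻¹ = 2 - b`. -/
def lowerBlock (b : Matrix n n α) : Matrix (n ⊕ n) (n ⊕ n) α :=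
  fromBlocks b 0 b (2 - b)

variable {b c : Matrix n n α}

theorem lowerBlock_sub_one_sq_eq_zero (hb : (b - 1) ^ 2 = 0) : (lowerBlock b - 1) ^ 2 = 0 := by
  have hb' : (2 - b - 1) ^ 2 = 0 := by rw [← hb]; noncomm_ring
  rw [lowerBlock, fromBlocks_zero_sub_one_sq, hb, hb']
  have hC : b * (b - 1) + (2 - b - 1) * b = 0 := by noncomm_ring
  rw [hC, fromBlocks_zero]

theorem lowerBlock_mul_lowerBlock_sub_one_sq_eq_zero (hb : (b - 1) ^ 2 = 0)
    (hc : (c - 1) ^ 2 = 0) (hbc : (b * c - 1) ^ 2 = 0) :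
    (lowerBlock b * lowerBlock c - 1) ^ 2 = 0 := by
  have hcb := mul_swap_sub_one_sq_eq_zero hb hbc
  have hD : (2 - b) * (2 - c) = 2 - c * b := by
    refine left_inv_eq_right_inv ?_ (mul_two_sub_eq_one_of_sub_one_sq_eq_zero hcb)
    calc (2 - b) * (2 - c) * (c * b) = (2 - b) * ((2 - c) * c) * b := by noncomm_ring
      _ = 1 := by
        rw [two_sub_mul_eq_one_of_sub_one_sq_eq_zero hc, mul_one,
          two_sub_mul_eq_one_of_sub_one_sq_eq_zero hb]
  have hD' : (2 - c * b - 1) ^ 2 = 0 := by rw [← hcb]; noncomm_ring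
  have hC : (b * c + (2 - b) * c) * (b * c - 1) + (2 - c * b - 1) * (b * c + (2 - b) * c) = 0 := by
    noncomm_ring
  rw [lowerBlock, lowerBlock, fromBlocks_multiply]
  simp only [mul_zero, zero_mul, add_zero, zero_add]
  rw [hD, fromBlocks_zero_sub_one_sq, hbc, hD', hC, fromBlocks_zero]

end Matrix

theorem map_sub_one_sq_eq_zero {F R S : Type*} [Ring R] [Ring S] [FunLike F R S]
    [RingHomClass F R S] (f : F) {x : R} (hx : (x - 1) ^ 2 = 0) : (f x - 1) ^ 2 = 0 := by
  rw [← map_one f, ← map_sub, ← map_pow, hx, map_zero]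

theorem am_zero (d : ℕ) : am d 0 = 1 := by
  cases d <;> rfl

theorem am_succ_succ {d i : ℕ} (h : (am d i - 1) ^ 2 = 0) :
    am (d + 1) (i + 1) =
      Matrix.reindexAlgEquiv ℤ ℤ (blockEquiv d) (Matrix.lowerBlock (am d i)) := by
  rw [Matrix.lowerBlock, ← Matrix.inv_eq_two_sub_of_sub_one_sq_eq_zero h]
  cases i with
  | zero => rw [am_zero, inv_one]; rfl
  | succ i => rfl

theorem am_sub_one_sq_eq_zero : ∀ d i, i ≤ d → (am d i - 1) ^ 2 = 0
  | _, 0, _ => by rw [am_zero, sub_self, sq, zero_mul]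
  | d + 1, i + 1, hi => by
    have hb := am_sub_one_sq_eq_zero d i (by omega)
    rw [am_succ_succ hb]
    exact map_sub_one_sq_eq_zero _ (Matrix.lowerBlock_sub_one_sq_eq_zero hb)

theorem am_mul_am_sub_one_sq_eq_zero :
    ∀ d i j, i < j → j ≤ d → (am d i * am d j - 1) ^ 2 = 0
  | d, 0, j, _, hj => by rw [am_zero, one_mul]; exact am_sub_one_sq_eq_zero d j hj
  | d + 1, i + 1, j + 1, hij, hj => by
    have hb := am_sub_one_sq_eq_zero d i (by omega)
    have hc := am_sub_one_sq_eq_zero d j (by omega)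
    have hbc := am_mul_am_sub_one_sq_eq_zero d i j (by omega) (by omega)
    rw [am_succ_succ hb, am_succ_succ hc, ← map_mul]
    exact map_sub_one_sq_eq_zero _ (Matrix.lowerBlock_mul_lowerBlock_sub_one_sq_eq_zero hb hc hbc)
  | 0, _ + 1, _, hij, hj => by omega

/-- Each `a_{i,d}` (for `1 ≤ i ≤ d`) is invertible over `ℤ`; for
`2 ≤ i ≤ d` one has `a_{i,d} + a_{i,d}⁻¹ = 2·I`; moreover `(a_{i,d} - I)² = 0` for
`1 ≤ i ≤ d` and `(a_{i,d}·a_{j,d} - I)² = 0` for `1 ≤ i < j ≤ d`. -/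
theorem am_properties (d : ℕ) :
    (∀ i, 1 ≤ i → i ≤ d → IsUnit (am d i)) ∧
    (∀ i, 2 ≤ i → i ≤ d → am d i + (am d i)⁻¹ = 2) ∧
    (∀ i, 1 ≤ i → i ≤ d → (am d i - 1) ^ 2 = 0) ∧
    (∀ i j, 1 ≤ i → i < j → j ≤ d → (am d i * am d j - 1) ^ 2 = 0) := by
  refine ⟨fun i _ hi => ?_, fun i _ hi => ?_, fun i _ hi => am_sub_one_sq_eq_zero d i hi,
    fun i j _ hij hj => am_mul_am_sub_one_sq_eq_zero d i j hij hj⟩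
  · simpa using IsNilpotent.isUnit_add_one ⟨2, am_sub_one_sq_eq_zero d i hi⟩
  · rw [Matrix.inv_eq_two_sub_of_sub_one_sq_eq_zero (am_sub_one_sq_eq_zero d i hi),
      add_sub_cancel]
end

section
/- The assignment y_i ↦ a_{i,d} induces a well-defined ring homomorphism φ : A_d → M(2^d, ℤ); this homomorphism φ is injective, and A_d is a free ℤ-module of rank 2^d. -/
/-!
Put `t_i = y_i - 1`. The relation for `y_i` says `t_i² = 0`, and then the relation for `y_i y_j`
reads `(1 + t_i)(t_i t_j + t_j t_i)(1 + t_j) = 0`, so the `t_i` anticommute. Hence `A_d` is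
spanned by the `2^d` ordered monomials `t_S`, and every family of anticommuting square-zero
elements of a ring is the image of the `t_i` under a ring homomorphism out of `A_d`.
The matrices `b_i = a_{i,d} - 1` form such a family; the `2 × 2` block recursion makes the
monomials in the `b_i` lower block-triangular, and induction on `d` shows that they are linearly
independent. So the `t_S` are a basis of `A_d` mapped to an independent family, which gives
injectivity and rank `2^d`.
-/

/-- The set `S_d = {y_i : 1 ≤ i ≤ d} ∪ {y_i y_j : 1 ≤ i < j ≤ d}` in the free group
of rank `d` (generators `y_{i+1} = FreeGroup.of i`). -/
def Sd (d : ℕ) : Set (FreeGroup (Fin d)) :=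
  Set.range FreeGroup.of ∪
    {w | ∃ i j : Fin d, i < j ∧ w = FreeGroup.of i * FreeGroup.of j}

/-- The relation imposing `(x - 1)² = 0` in `ℤ F_d` for every `x ∈ S_d`. -/
def quadRel (d : ℕ) (p q : MonoidAlgebra ℤ (FreeGroup (Fin d))) : Prop :=
  ∃ s ∈ Sd d, p = (MonoidAlgebra.of ℤ (FreeGroup (Fin d)) s - 1) ^ 2 ∧ q = 0

/-- The quotient ring `A_d = ℤ F_d / ⟨(x-1)² : x ∈ S_d⟩`. -/
abbrev Ad (d : ℕ) := RingQuot (quadRel d)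

section OrderedProd

variable {R : Type*} [Monoid R]

def orderedProd {d : ℕ} (t : Fin d → R) (s : Fin d → Bool) : R :=
  (List.ofFn fun i => if s i then t i else 1).prod

theorem orderedProd_succ {d : ℕ} (t : Fin (d + 1) → R) (s : Fin (d + 1) → Bool) :
    orderedProd t s = (if s 0 then t 0 else 1) * orderedProd (Fin.tail t) (Fin.tail s) := by
  rw [orderedProd, List.ofFn_succ, List.prod_cons]
  rfl

theorem orderedProd_const_false {d : ℕ} (t : Fin d → R) : orderedProd t (fun _ => false) = 1 := by
  simp [orderedProd]

theorem map_orderedProd {S F : Type*} [Monoid S] [FunLike F R S] [MonoidHomClass F R S] (f : F)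
    {d : ℕ} (t : Fin d → R) (s : Fin d → Bool) :
    f (orderedProd t s) = orderedProd (fun i => f (t i)) s := by
  simp only [orderedProd, map_list_prod, List.map_ofFn]
  congr 2 with i
  simp only [Function.comp_apply]
  split_ifs <;> simp

end OrderedProd

theorem mul_mem_of_mem_span {k R : Type*} [CommRing k] [Ring R] [Algebra k R] {c x : R}
    {s : Set R} {N : Submodule k R} (h : ∀ y ∈ s, c * y ∈ N) (hx : x ∈ Submodule.span k s) :
    c * x ∈ N :=
  (Submodule.map_span_le (LinearMap.mulLeft k c) s N).2 h (Submodule.mem_map_of_mem hx)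

structure IsGrassmann {ι R : Type*} [Ring R] (t : ι → R) : Prop where
  mul_self : ∀ i, t i * t i = 0
  anticomm : ∀ i j, i ≠ j → t i * t j + t j * t i = 0

namespace IsGrassmann

variable {ι R : Type*} [Ring R] {t : ι → R}

theorem comp_injective (ht : IsGrassmann t) {κ : Type*} {f : κ → ι} (hf : f.Injective) :
    IsGrassmann (t ∘ f) :=
  ⟨fun i => ht.mul_self (f i), fun i j hij => ht.anticomm (f i) (f j) (hf.ne hij)⟩

theorem map (ht : IsGrassmann t) {S F : Type*} [Ring S] [FunLike F R S] [RingHomClass F R S]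
    (f : F) : IsGrassmann fun i => f (t i) :=
  ⟨fun i => by rw [← map_mul, ht.mul_self, map_zero],
    fun i j hij => by rw [← map_mul, ← map_mul, ← map_add, ht.anticomm i j hij, map_zero]⟩

theorem mul_mem_span_orderedProd {k : Type*} [CommRing k] [Algebra k R] :
    ∀ {d : ℕ} {t : Fin d → R}, IsGrassmann t → ∀ (i : Fin d) (s : Fin d → Bool),
      t i * orderedProd t s ∈ Submodule.span k (Set.range (orderedProd t))
  | 0, _, _, i, _ => i.elim0
  | d + 1, t, ht, i, s => by
    set c := if s 0 then t 0 else 1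
    have hc : ∀ x ∈ Submodule.span k (Set.range (orderedProd (Fin.tail t))),
        c * x ∈ Submodule.span k (Set.range (orderedProd t)) := fun x =>
      mul_mem_of_mem_span <| Set.forall_mem_range.2 fun u =>
        Submodule.subset_span ⟨Fin.cons (s 0) u, by simp [orderedProd_succ, c]⟩
    rw [orderedProd_succ]
    induction i using Fin.cases with
    | zero =>
      cases s 0
      · refine Submodule.subset_span ⟨Fin.cons true (Fin.tail s), ?_⟩
        simp [orderedProd_succ]
      · simp [← mul_assoc, ht.mul_self]
    | succ j =>
      have hcomm : t j.succ * c = c * t j.succ ∨ t j.succ * c = -(c * t j.succ) := by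
        simp only [c]
        cases s 0
        · simp
        · exact Or.inr (eq_neg_of_add_eq_zero_left (ht.anticomm _ _ (Fin.succ_ne_zero j)))
      have hmem := hc _ <|
        (ht.comp_injective (Fin.succ_injective d)).mul_mem_span_orderedProd (k := k) j (Fin.tail s)
      rcases hcomm with h | h
      · rwa [← mul_assoc, h, mul_assoc]
      · rw [← mul_assoc, h, neg_mul, mul_assoc]
        exact Submodule.neg_mem _ hmem

theorem span_orderedProd_eq_top {k : Type*} [CommRing k] [Algebra k R] {d : ℕ} {t : Fin d → R}
    (ht : IsGrassmann t) (hgen : Algebra.adjoin k (Set.range t) = ⊤) :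
    Submodule.span k (Set.range (orderedProd t)) = ⊤ := by
  set N := Submodule.span k (Set.range (orderedProd t))
  have hmul : ∀ x ∈ Algebra.adjoin k (Set.range t), ∀ y ∈ N, x * y ∈ N := by
    intro x hx
    induction hx using Algebra.adjoin_induction with
    | mem _ hx =>
      obtain ⟨i, rfl⟩ := hx
      exact fun y => mul_mem_of_mem_span <| Set.forall_mem_range.2 (ht.mul_mem_span_orderedProd i)
    | algebraMap r => intro y hy; rw [← Algebra.smul_def]; exact Submodule.smul_mem _ r hy
    | add _ _ _ _ h₁ h₂ => intro y hy; rw [add_mul]; exact add_mem (h₁ y hy) (h₂ y hy)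
    | mul _ _ _ _ h₁ h₂ => intro y hy; rw [mul_assoc]; exact h₁ _ (h₂ y hy)
  refine eq_top_iff.2 fun x _ => ?_
  have h1 : (1 : R) ∈ N := Submodule.subset_span ⟨_, orderedProd_const_false t⟩
  simpa using hmul x (hgen ▸ Algebra.mem_top) 1 h1

end IsGrassmann

section SquareZero

variable {R : Type*} [Ring R] {x y : R}

theorem isUnit_one_add_of_mul_self_eq_zero (hx : x * x = 0) : IsUnit (1 + x) :=
  IsNilpotent.isUnit_one_add ⟨2, by rw [sq, hx]⟩

theorem one_add_mul_one_sub_of_mul_self_eq_zero (hx : x * x = 0) : (1 + x) * (1 - x) = 1 := by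
  have h : (1 + x) * (1 - x) = 1 - x * x := by noncomm_ring
  rw [h, hx, sub_zero]

theorem sq_one_add_mul_one_add_sub_one_eq_zero_iff (hx : x * x = 0) (hy : y * y = 0) :
    ((1 + x) * (1 + y) - 1) ^ 2 = 0 ↔ x * y + y * x = 0 := by
  have h : ((1 + x) * (1 + y) - 1) ^ 2 =
      (1 + x) * (x * y + y * x) * (1 + y) + x * x - x * x * (y * y) + y * y := by
    noncomm_ring
  rw [h, hx, hy, mul_zero, add_zero, sub_zero, add_zero,
    (isUnit_one_add_of_mul_self_eq_zero hy).mul_left_eq_zero,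
    (isUnit_one_add_of_mul_self_eq_zero hx).mul_right_eq_zero]

end SquareZero

namespace Ad

noncomputable def of (d : ℕ) : FreeGroup (Fin d) →* Ad d :=
  (RingQuot.mkAlgHom ℤ (quadRel d) : MonoidAlgebra ℤ (FreeGroup (Fin d)) →* Ad d).comp
    (MonoidAlgebra.of ℤ (FreeGroup (Fin d)))

noncomputable def gen (d : ℕ) (i : Fin d) : Ad d := of d (FreeGroup.of i) - 1

theorem of_of (d : ℕ) (i : Fin d) : of d (FreeGroup.of i) = 1 + gen d i := by
  rw [gen, add_sub_cancel]

theorem sq_of_sub_one {d : ℕ} {s : FreeGroup (Fin d)} (hs : s ∈ Sd d) : (of d s - 1) ^ 2 = 0 := by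
  have h := RingQuot.mkAlgHom_rel ℤ (show quadRel d _ 0 from ⟨s, hs, rfl, rfl⟩)
  rwa [map_pow, map_sub, map_one, map_zero] at h

theorem isGrassmann_gen (d : ℕ) : IsGrassmann (gen d) := by
  have hsq : ∀ i, gen d i * gen d i = 0 := fun i => by
    rw [← sq]; exact sq_of_sub_one (Or.inl ⟨i, rfl⟩)
  have hlt : ∀ i j, i < j → gen d i * gen d j + gen d j * gen d i = 0 := fun i j hij => by
    have h := sq_of_sub_one (Or.inr ⟨i, j, hij, rfl⟩)
    rwa [map_mul, of_of, of_of, sq_one_add_mul_one_add_sub_one_eq_zero_iff (hsq i) (hsq j)] at h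
  refine ⟨hsq, fun i j hij => ?_⟩
  rcases hij.lt_or_gt with h | h
  · exact hlt i j h
  · rw [add_comm]; exact hlt j i h

theorem of_mem_adjoin_range_gen {d : ℕ} (g : FreeGroup (Fin d)) :
    of d g ∈ Algebra.adjoin ℤ (Set.range (gen d)) := by
  have hgen : ∀ i, gen d i ∈ Algebra.adjoin ℤ (Set.range (gen d)) :=
    fun i => Algebra.subset_adjoin ⟨i, rfl⟩
  induction g using FreeGroup.induction_on with
  | C1 => rw [map_one]; exact one_mem _
  | of i => rw [of_of]; exact add_mem (one_mem _) (hgen i)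
  | inv_of i _ =>
    have hinv : of d (FreeGroup.of i)⁻¹ = 1 - gen d i :=
      left_inv_eq_right_inv (by rw [← map_mul, inv_mul_cancel, map_one])
        (by rw [of_of, one_add_mul_one_sub_of_mul_self_eq_zero ((isGrassmann_gen d).mul_self i)])
    rw [hinv]; exact sub_mem (one_mem _) (hgen i)
  | mul _ _ h₁ h₂ => rw [map_mul]; exact mul_mem h₁ h₂

theorem adjoin_range_gen (d : ℕ) : Algebra.adjoin ℤ (Set.range (gen d)) = ⊤ := by
  rw [eq_top_iff]
  rintro x -
  obtain ⟨p, rfl⟩ := RingQuot.mkAlgHom_surjective ℤ (quadRel d) x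
  induction p using MonoidAlgebra.induction_on with
  | of g => exact of_mem_adjoin_range_gen g
  | add _ _ h₁ h₂ => rw [map_add]; exact add_mem h₁ h₂
  | smul r _ h => rw [map_smul]; exact Subalgebra.smul_mem _ h r

section Lift

variable {R : Type*} [Ring R] [Algebra ℤ R] {d : ℕ} (t : Fin d → R) (ht : IsGrassmann t)

noncomputable def liftFree : MonoidAlgebra ℤ (FreeGroup (Fin d)) →ₐ[ℤ] R :=
  MonoidAlgebra.lift ℤ R _ <| (Units.coeHom R).comp <|
    FreeGroup.lift fun i => (isUnit_one_add_of_mul_self_eq_zero (ht.mul_self i)).unit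

theorem liftFree_of_of (i : Fin d) :
    liftFree t ht (MonoidAlgebra.of ℤ _ (FreeGroup.of i)) = 1 + t i := by
  rw [liftFree, MonoidAlgebra.lift_of]
  simp

theorem liftFree_eq_of_quadRel ⦃p q : MonoidAlgebra ℤ (FreeGroup (Fin d))⦄ (h : quadRel d p q) :
    liftFree t ht p = liftFree t ht q := by
  obtain ⟨s, hs, rfl, rfl⟩ := h
  rw [map_pow, map_sub, map_one, map_zero]
  rcases hs with ⟨i, rfl⟩ | ⟨i, j, hij, rfl⟩
  · rw [liftFree_of_of, add_sub_cancel_left, sq, ht.mul_self]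
  · rw [map_mul, map_mul, liftFree_of_of, liftFree_of_of,
      sq_one_add_mul_one_add_sub_one_eq_zero_iff (ht.mul_self i) (ht.mul_self j)]
    exact ht.anticomm i j hij.ne

noncomputable def lift : Ad d →ₐ[ℤ] R :=
  RingQuot.liftAlgHom ℤ ⟨liftFree t ht, liftFree_eq_of_quadRel t ht⟩

theorem lift_of_of (i : Fin d) : lift t ht (of d (FreeGroup.of i)) = 1 + t i :=
  (RingQuot.liftAlgHom_mkAlgHom_apply ℤ _ _ _).trans (liftFree_of_of t ht i)

theorem lift_gen (i : Fin d) : lift t ht (gen d i) = t i := by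
  rw [gen, map_sub, map_one, lift_of_of, add_sub_cancel_left]

end Lift

end Ad

section BlockStep

open Matrix

-- Subtracting `1` from the recursion defining `am` turns it into this recursion for
-- `a_{i,d} - 1`, because `a⁻¹ = 1 - (a - 1)` when `(a - 1)² = 0`.
def grassmannBlockStep {n R : Type*} [DecidableEq n] [Ring R] {d : ℕ}
    (u : Fin d → Matrix n n R) : Fin (d + 1) → Matrix (n ⊕ n) (n ⊕ n) R :=
  Fin.cons (fromBlocks 0 0 1 0) fun i => fromBlocks (u i) 0 (1 + u i) (-u i)

variable {n R : Type*} [Fintype n] [DecidableEq n]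

theorem IsGrassmann.grassmannBlockStep [Ring R] {d : ℕ} {u : Fin d → Matrix n n R}
    (hu : IsGrassmann u) : IsGrassmann (grassmannBlockStep u) := by
  have h : ∀ x y : Matrix n n R, (1 + x) * y + -(x * (1 + y)) = y - x := fun x y => by
    noncomm_ring
  constructor
  · intro i
    induction i using Fin.cases with
    | zero => simp [_root_.grassmannBlockStep, fromBlocks_multiply]
    | succ i =>
      simp [_root_.grassmannBlockStep, fromBlocks_multiply, hu.mul_self, h]
  · intro i j hij
    induction i using Fin.cases with
    | zero =>
      induction j using Fin.cases with
      | zero => exact absurd rfl hij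
      | succ j => simp [_root_.grassmannBlockStep, fromBlocks_multiply, fromBlocks_add]
    | succ i =>
      induction j using Fin.cases with
      | zero => simp [_root_.grassmannBlockStep, fromBlocks_multiply, fromBlocks_add]
      | succ j =>
        simp [_root_.grassmannBlockStep, fromBlocks_multiply, fromBlocks_add, h,
          hu.anticomm i j (fun h => hij (h ▸ rfl))]

theorem exists_orderedProd_fromBlocks_eq [Ring R] {m : Type*} [Fintype m] [DecidableEq m] :
    ∀ {d : ℕ} (a : Fin d → Matrix n n R) (c : Fin d → Matrix m n R) (e : Fin d → Matrix m m R)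
      (s : Fin d → Bool), ∃ C D,
      orderedProd (fun i => fromBlocks (a i) 0 (c i) (e i)) s = fromBlocks (orderedProd a s) 0 C D
  | 0, _, _, _, _ => ⟨0, 1, fromBlocks_one.symm⟩
  | d + 1, a, c, e, s => by
    obtain ⟨C, D, h⟩ := exists_orderedProd_fromBlocks_eq (Fin.tail a) (Fin.tail c) (Fin.tail e)
      (Fin.tail s)
    rw [orderedProd_succ, orderedProd_succ]
    have h' : orderedProd (Fin.tail fun i => fromBlocks (a i) 0 (c i) (e i)) (Fin.tail s) =
        fromBlocks (orderedProd (Fin.tail a) (Fin.tail s)) 0 C D := h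
    rw [h']
    cases s 0
    · simp [← fromBlocks_one, fromBlocks_multiply]
    · simp [fromBlocks_multiply]

theorem LinearIndependent.orderedProd_grassmannBlockStep [CommRing R] {d : ℕ}
    {u : Fin d → Matrix n n R} (hu : LinearIndependent R (orderedProd u)) :
    LinearIndependent R (orderedProd (grassmannBlockStep u)) := by
  choose C D hCD using exists_orderedProd_fromBlocks_eq u (fun i => 1 + u i) (fun i => -u i)
  have hfalse : ∀ s, orderedProd (grassmannBlockStep u) (Fin.cons false s) =
      fromBlocks (orderedProd u s) 0 (C s) (D s) := fun s => by
    rw [orderedProd_succ]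
    simpa [grassmannBlockStep] using hCD s
  have htrue : ∀ s, orderedProd (grassmannBlockStep u) (Fin.cons true s) =
      fromBlocks 0 0 (orderedProd u s) 0 := fun s => by
    rw [orderedProd_succ]
    simp [grassmannBlockStep, hCD, fromBlocks_multiply]
  rw [Fintype.linearIndependent_iff] at hu ⊢
  intro g hg
  have hentry : ∀ i j,
      ∑ s, g (Fin.cons true s) * orderedProd (grassmannBlockStep u) (Fin.cons true s) i j +
        ∑ s, g (Fin.cons false s) * orderedProd (grassmannBlockStep u) (Fin.cons false s) i j
        = 0 := by
    intro i j
    have := congr_fun₂ hg i j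
    rw [Matrix.sum_apply, ← (Fin.consEquiv fun _ => Bool).sum_comp, Fintype.sum_prod_type,
      Fintype.sum_bool] at this
    exact this
  -- The top-left block only sees the monomials without the first factor; once their coefficients
  -- vanish, the bottom-left block isolates the others.
  have h₁ : ∀ s, g (Fin.cons false s) = 0 := hu _ <| by
    ext i j
    simpa [Matrix.sum_apply, hfalse, htrue] using hentry (.inl i) (.inl j)
  have h₂ : ∀ s, g (Fin.cons true s) = 0 := hu _ <| by
    ext i j
    simpa [Matrix.sum_apply, hfalse, htrue, h₁] using hentry (.inr i) (.inl j)
  intro s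
  rw [← Fin.cons_self_tail s]
  cases s 0
  exacts [h₁ _, h₂ _]

end BlockStep

section BlockRecursion

open Matrix

noncomputable def blockAlgEquiv (d : ℕ) :
    Matrix (Fin (2 ^ d) ⊕ Fin (2 ^ d)) (Fin (2 ^ d) ⊕ Fin (2 ^ d)) ℤ ≃ₐ[ℤ]
      Matrix (Fin (2 ^ (d + 1))) (Fin (2 ^ (d + 1))) ℤ :=
  Matrix.reindexAlgEquiv ℤ ℤ (blockEquiv d)

noncomputable def amSubOne (d : ℕ) (i : Fin d) : Matrix (Fin (2 ^ d)) (Fin (2 ^ d)) ℤ :=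
  am d (i + 1) - 1

theorem am_eq_one_add_amSubOne (d : ℕ) (i : Fin d) : am d (i + 1) = 1 + amSubOne d i := by
  rw [amSubOne, add_sub_cancel]

theorem amSubOne_succ {d : ℕ} (h : ∀ i, amSubOne d i * amSubOne d i = 0) :
    amSubOne (d + 1) = fun i => blockAlgEquiv d (grassmannBlockStep (amSubOne d) i) := by
  funext i
  rw [amSubOne, ← map_one (blockAlgEquiv d), ← Matrix.fromBlocks_one]
  induction i using Fin.cases with
  | zero =>
    rw [Fin.val_zero, show am (d + 1) (0 + 1) = blockAlgEquiv d (fromBlocks 1 0 1 1) from rfl,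
      ← map_sub]
    congr 1
    rw [sub_eq_add_neg, fromBlocks_neg, fromBlocks_add]
    simp [grassmannBlockStep]
  | succ i =>
    have hinv : (am d (i + 1))⁻¹ = 1 - amSubOne d i :=
      Matrix.inv_eq_right_inv (by
        rw [am_eq_one_add_amSubOne, one_add_mul_one_sub_of_mul_self_eq_zero (h i)])
    rw [Fin.val_succ, show am (d + 1) (i + 1 + 1) = blockAlgEquiv d
      (fromBlocks (am d (i + 1)) 0 (am d (i + 1)) (am d (i + 1))⁻¹) from rfl, ← map_sub, hinv,
      am_eq_one_add_amSubOne]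
    congr 1
    rw [sub_eq_add_neg, fromBlocks_neg, fromBlocks_add]
    simp only [grassmannBlockStep, Fin.cons_succ, neg_zero, add_zero]
    congr 1 <;> abel

theorem isGrassmann_amSubOne : ∀ d, IsGrassmann (amSubOne d)
  | 0 => ⟨fun i => i.elim0, fun i => i.elim0⟩
  | d + 1 => by
    rw [amSubOne_succ (isGrassmann_amSubOne d).mul_self]
    exact (isGrassmann_amSubOne d).grassmannBlockStep.map (blockAlgEquiv d)

theorem linearIndependent_orderedProd_amSubOne :
    ∀ d, LinearIndependent ℤ (orderedProd (amSubOne d))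
  | 0 => linearIndependent_unique_iff.2 (by simp [orderedProd])
  | d + 1 => by
    rw [amSubOne_succ (isGrassmann_amSubOne d).mul_self]
    have h : orderedProd (fun i => blockAlgEquiv d (grassmannBlockStep (amSubOne d) i)) =
        blockAlgEquiv d ∘ orderedProd (grassmannBlockStep (amSubOne d)) :=
      funext fun s => (map_orderedProd (blockAlgEquiv d) _ s).symm
    rw [h]
    exact (linearIndependent_orderedProd_amSubOne d).orderedProd_grassmannBlockStep.map'
      (blockAlgEquiv d).toLinearEquiv.toLinearMap (blockAlgEquiv d).toLinearEquiv.ker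

end BlockRecursion

/-- The assignment `y_i ↦ a_{i,d}` induces a well-defined ring
homomorphism `φ : A_d → M(2^d, ℤ)`; `φ` is injective, and `A_d` is a free
`ℤ`-module of rank `2^d`. -/
theorem Ad_faithful_representation (d : ℕ) :
    ∃ φ : Ad d →ₐ[ℤ] Matrix (Fin (2 ^ d)) (Fin (2 ^ d)) ℤ,
      (∀ i : Fin d,
          φ (RingQuot.mkAlgHom ℤ (quadRel d)
              (MonoidAlgebra.of ℤ (FreeGroup (Fin d)) (FreeGroup.of i))) =
            am d ((i : ℕ) + 1)) ∧
      Function.Injective φ ∧ Module.Free ℤ (Ad d) ∧ Module.finrank ℤ (Ad d) = 2 ^ d := by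
  set φ := Ad.lift (amSubOne d) (isGrassmann_amSubOne d)
  have hspan : Submodule.span ℤ (Set.range (orderedProd (Ad.gen d))) = ⊤ :=
    (Ad.isGrassmann_gen d).span_orderedProd_eq_top (Ad.adjoin_range_gen d)
  have hφ : φ.toLinearMap ∘ orderedProd (Ad.gen d) = orderedProd (amSubOne d) :=
    funext fun s => by simp [φ, map_orderedProd, Ad.lift_gen]
  have hli : LinearIndependent ℤ (φ.toLinearMap ∘ orderedProd (Ad.gen d)) :=
    hφ ▸ linearIndependent_orderedProd_amSubOne d
  let b : Module.Basis (Fin d → Bool) ℤ (Ad d) := .mk hli.of_comp hspan.ge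
  refine ⟨φ, fun i => ?_, LinearMap.injective_of_linearIndependent hspan hli,
    .of_basis b, ?_⟩
  · rw [am_eq_one_add_amSubOne]
    exact Ad.lift_of_of _ _ i
  · rw [Module.finrank_eq_card_basis b]
    simp
end

section
/- Let R be an associative unital ring and let x, y be units of R satisfying (x−1)² = (y−1)² = (xy−1)² = 0. Then: (a) (y−1)(x−1) = −(x−1)(y−1); (b) x^k − 1 = k(x−1) for every integer k; (c) [x,y] − 1 = 2(x−1)(y−1), where [x,y] = x⁻¹y⁻¹xy; and (d) ([x,y] − 1)² = 0. -/
/-!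
Write `a = x - 1`, `b = y - 1` and `c = xy - 1`. From `a² = b² = 0` one gets `ac = ab = cb`,
so `(ab)² = ac²b`, `aba = ac² - ab² - (ab)²` and `bab = c²b - a²b - (ab)²` all vanish; what is
left of `c² = 0` is `ab + ba = 0`. A unit `u` with `(u - 1)² = 0` has `u⁻¹ = 2 - u`, which drives
the induction over `ℤ` in (b) and turns `x⁻¹y⁻¹xy` into `(1 - a)(1 - b)(1 + a)(1 + b) = 1 + 2ab`
once `ba = -ab`. Finally `(2ab)² = 4a(ba)b = -4a²b² = 0`.
-/

section

variable {R : Type*} [Ring R]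

theorem sub_one_mul_sub_one_anticomm {x y : R} (hx : (x - 1) ^ 2 = 0) (hy : (y - 1) ^ 2 = 0)
    (hxy : (x * y - 1) ^ 2 = 0) : (y - 1) * (x - 1) = -((x - 1) * (y - 1)) := by
  have hac : (x - 1) * (x * y - 1) = (x - 1) * (y - 1) := by
    linear_combination (norm := noncomm_ring) hx * y
  have hcb : (x * y - 1) * (y - 1) = (x - 1) * (y - 1) := by
    linear_combination (norm := noncomm_ring) x * hy
  have habab : (x - 1) * (y - 1) * ((x - 1) * (y - 1)) = 0 := by
    linear_combination (norm := noncomm_ring)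
      (x - 1) * hxy * (y - 1) - hac * ((x - 1) * (y - 1)) - (x - 1) * (x * y - 1) * hcb
  have haba : (x - 1) * (y - 1) * (x - 1) = 0 := by
    linear_combination (norm := noncomm_ring)
      (x - 1) * hxy - hac * (x * y - 1) - (x - 1) * hy - habab
  have hbab : (y - 1) * (x - 1) * (y - 1) = 0 := by
    linear_combination (norm := noncomm_ring)
      hxy * (y - 1) - (x * y - 1) * hcb - hx * (y - 1) - habab
  linear_combination (norm := noncomm_ring)
    hxy - hx - hy - hx * (y - 1) - (x - 1) * hy - haba - hbab - habab

namespace Units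

theorem val_inv_eq_two_sub {u : Rˣ} (hu : ((u : R) - 1) ^ 2 = 0) : ((u⁻¹ : Rˣ) : R) = 2 - u :=
  Units.inv_eq_of_mul_eq_one_right (by linear_combination (norm := noncomm_ring) -hu)

theorem val_zpow_sub_one {u : Rˣ} (hu : ((u : R) - 1) ^ 2 = 0) (k : ℤ) :
    ((u ^ k : Rˣ) : R) - 1 = k * ((u : R) - 1) := by
  induction k using Int.induction_on with
  | zero => simp
  | succ k ih =>
    rw [zpow_add_one, val_mul]
    push_cast at ih ⊢
    linear_combination (norm := noncomm_ring) ih * u + k * hu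
  | pred k ih =>
    rw [zpow_sub_one, val_mul, val_inv_eq_two_sub hu]
    push_cast at ih ⊢
    linear_combination (norm := noncomm_ring) ih * (2 - u) + k * hu

theorem val_commutator_sub_one {x y : Rˣ} (hx : ((x : R) - 1) ^ 2 = 0)
    (hy : ((y : R) - 1) ^ 2 = 0)
    (hanti : ((y : R) - 1) * ((x : R) - 1) = -(((x : R) - 1) * ((y : R) - 1))) :
    ((x⁻¹ * y⁻¹ * x * y : Rˣ) : R) - 1 = 2 * (((x : R) - 1) * ((y : R) - 1)) := by
  rw [val_mul, val_mul, val_mul, val_inv_eq_two_sub hx, val_inv_eq_two_sub hy]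
  linear_combination (norm := noncomm_ring)
    (x - 2) * hanti * y - hx * y ^ 2 - hy + 2 * (x - 1) * hy

end Units

end

/-- Let `R` be an associative unital ring and `x, y` units of `R` with
`(x-1)² = (y-1)² = (xy-1)² = 0`.  Then
(a) `(y-1)(x-1) = -(x-1)(y-1)`;
(b) `x^k - 1 = k (x-1)` for every integer `k`;
(c) `[x,y] - 1 = 2 (x-1)(y-1)` where `[x,y] = x⁻¹y⁻¹xy`;
(d) `([x,y] - 1)² = 0`. -/
theorem quadratic_unipotent_relations (R : Type*) [Ring R] (x y : Rˣ)
    (hx : ((x : R) - 1) ^ 2 = 0) (hy : ((y : R) - 1) ^ 2 = 0)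
    (hxy : (((x * y : Rˣ) : R) - 1) ^ 2 = 0) :
    ((y : R) - 1) * ((x : R) - 1) = -(((x : R) - 1) * ((y : R) - 1)) ∧
    (∀ k : ℤ, ((x ^ k : Rˣ) : R) - 1 = (k : R) * ((x : R) - 1)) ∧
    (((x⁻¹ * y⁻¹ * x * y : Rˣ) : R) - 1 = 2 * (((x : R) - 1) * ((y : R) - 1))) ∧
    ((((x⁻¹ * y⁻¹ * x * y : Rˣ) : R) - 1) ^ 2 = 0) := by
  rw [Units.val_mul] at hxy
  have hanti := sub_one_mul_sub_one_anticomm hx hy hxy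
  have hcomm := Units.val_commutator_sub_one hx hy hanti
  refine ⟨hanti, Units.val_zpow_sub_one hx, hcomm, ?_⟩
  rw [hcomm]
  linear_combination (norm := noncomm_ring)
    4 * (x - 1) * hanti * (y - 1) - 4 * hx * (y - 1) ^ 2
end

section
/- The following relations hold: VUV = UVU − UV² + U²V − V²U + VU²; UVUV = −2UVU − 2U²V + V²U² − 2VU²; VUVU = −2UVU + U²V² − 2U²V − 2VU²; UV²U = 2(UVU + U²V + VU²) − U²V² − V²U²; VU²V = UV²U; UVU² = −U²VU; VUV² = −V²UV; U²VU² = 0; and V²UV² = 0. -/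
/-!
If `g` is a unit with `(g - 1)³ = 0` then `g⁻¹ = 1 - (g - 1) + (g - 1)²`; for `g = y x⁻¹`
this becomes the identity `y x⁻¹ y - x y⁻¹ x = 3 (y - x)`. Put `x = b⁻¹`, `y = aᵏ` and
expand with `a = 1 + U`, `a⁻¹ = 1 - U + U²`: the third finite difference in `k` of these
identities (`k = 2, 1, 0, -1`; the one for `k = 0` is `V³ = 0`) is `3 (UVU² + U²VU)`, so
`UVU² = -U²VU` once `3` is invertible, and `VUV² = -V²UV` by the symmetry `a ↔ b`. The
identity for `k = -1` alone expresses `VUV` through the other cubic words plus these quartic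
and quintic terms, which vanish. Given these, the rest follows from
`g⁻¹ = 1 - (g - 1) + (g - 1)²` for `g = ab, ba` and from the identity for `(x, y) = (a, b)`.
-/

namespace Units

variable {R : Type*} [Ring R]

theorem val_inv_eq_of_pow_three_eq_zero {x : Rˣ} {X : R} (hx : (x : R) = 1 + X)
    (hX : X ^ 3 = 0) : ((x⁻¹ : Rˣ) : R) = 1 - X + X ^ 2 :=
  Units.inv_eq_of_mul_eq_one_right <| show (x : R) * (1 - X + X ^ 2) = 1 by
    rw [hx]; linear_combination (norm := noncomm_ring) hX

theorem sub_one_pow_eq_zero_mul_comm {x y : Rˣ} {n : ℕ} (h : ((x * y : Rˣ) - 1 : R) ^ n = 0) :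
    ((y * x : Rˣ) - 1 : R) ^ n = 0 := by
  have hconj : ((y * x : Rˣ) - 1 : R) = ↑x⁻¹ * ((x * y : Rˣ) - 1) * x := by
    simp [mul_sub, sub_mul]
  rw [hconj, conj_pow', h, mul_zero, zero_mul]

theorem sub_one_pow_eq_zero_inv {x : Rˣ} {n : ℕ} (h : ((x : R) - 1) ^ n = 0) :
    ((x⁻¹ : Rˣ) - 1 : R) ^ n = 0 := by
  have hcomm : Commute (-((x⁻¹ : Rˣ) : R)) ((x : R) - 1) :=
    ((Commute.refl (x : R)).units_inv_left.sub_right (Commute.one_right _)).neg_left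
  have hfac : ((x⁻¹ : Rˣ) - 1 : R) = -((x⁻¹ : Rˣ) : R) * ((x : R) - 1) := by
    rw [neg_mul, mul_sub, inv_mul, mul_one, neg_sub]
  rw [hfac, hcomm.mul_pow, h, mul_zero]

theorem mul_inv_mul_sub_mul_inv_mul {x y : Rˣ} (h : ((y * x⁻¹ : Rˣ) - 1 : R) ^ 3 = 0) :
    (y * ↑x⁻¹ * y - x * ↑y⁻¹ * x : R) = 3 * (y - x) := by
  obtain ⟨g, rfl⟩ : ∃ g, y = g * x := ⟨y * x⁻¹, by group⟩
  rw [_root_.mul_inv_cancel_right] at h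
  have hg := val_inv_eq_of_pow_three_eq_zero (add_sub_cancel (1 : R) g).symm h
  simp only [mul_inv_rev, val_mul, mul_assoc, mul_inv_cancel_left, hg]
  noncomm_ring

end Units

namespace CubicUnipotent

variable {R : Type*} [Ring R] {a b : Rˣ} {U V : R}

theorem u_sq_vu_sq_eq_zero (hU3 : U ^ 3 = 0) (h : U * V * U ^ 2 = -(U ^ 2 * V * U)) :
    U ^ 2 * V * U ^ 2 = 0 :=
  calc U ^ 2 * V * U ^ 2 = U * (U * V * U ^ 2) := by noncomm_ring
    _ = -(U ^ 3 * V * U) := by rw [h]; noncomm_ring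
    _ = 0 := by rw [hU3, zero_mul, zero_mul, neg_zero]

theorem uvu_sq_eq_neg (h3 : IsUnit (3 : R)) (hA : (a : R) = 1 + U) (hB : (b : R) = 1 + V)
    (hU3 : U ^ 3 = 0) (hV3 : V ^ 3 = 0) (h1 : ((a * b : Rˣ) - 1 : R) ^ 3 = 0)
    (hm1 : ((a⁻¹ * b : Rˣ) - 1 : R) ^ 3 = 0) (h2 : ((a ^ 2 * b : Rˣ) - 1 : R) ^ 3 = 0) :
    U * V * U ^ 2 = -(U ^ 2 * V * U) := by
  have hA' := Units.val_inv_eq_of_pow_three_eq_zero hA hU3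
  have hB' := Units.val_inv_eq_of_pow_three_eq_zero hB hV3
  have hA2' : ((a ^ 2)⁻¹ : Rˣ) = (1 - 2 * U + 3 * U ^ 2 : R) := by
    rw [← inv_pow, Units.val_pow_eq_pow_val, hA']
    linear_combination (norm := noncomm_ring) (U - 2) * hU3
  have m1 := Units.mul_inv_mul_sub_mul_inv_mul (x := b⁻¹) (y := a) (by rwa [inv_inv])
  have mm1 := Units.mul_inv_mul_sub_mul_inv_mul (x := b⁻¹) (y := a⁻¹) (by rwa [inv_inv])
  have m2 := Units.mul_inv_mul_sub_mul_inv_mul (x := b⁻¹) (y := a ^ 2) (by rwa [inv_inv])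
  simp only [inv_inv, Units.val_pow_eq_pow_val, hA, hA', hB, hB', hA2'] at m1 mm1 m2
  refine h3.mul_left_cancel ?_
  linear_combination (norm := noncomm_ring) m2 - mm1 - 3 * m1 - 6 * hU3 + 6 * hV3 - 3 * hV3 * V

theorem vuv_eq (hA : (a : R) = 1 + U) (hB : (b : R) = 1 + V) (hU3 : U ^ 3 = 0)
    (hV3 : V ^ 3 = 0) (hm1 : ((a⁻¹ * b : Rˣ) - 1 : R) ^ 3 = 0)
    (h6 : U * V * U ^ 2 = -(U ^ 2 * V * U)) (h7 : V * U * V ^ 2 = -(V ^ 2 * U * V)) :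
    V * U * V = U * V * U - U * V ^ 2 + U ^ 2 * V - V ^ 2 * U + V * U ^ 2 := by
  have hA' := Units.val_inv_eq_of_pow_three_eq_zero hA hU3
  have hB' := Units.val_inv_eq_of_pow_three_eq_zero hB hV3
  have m := Units.mul_inv_mul_sub_mul_inv_mul (x := b⁻¹) (y := a⁻¹) (by rwa [inv_inv])
  simp only [inv_inv, hA, hA', hB, hB'] at m
  linear_combination (norm := noncomm_ring) -m - h6 + h7 + U * h6 - V * h7
    - (2 - U) * hU3 - hU3 * (V * U) + (2 - V) * hV3 + hV3 * (U * V)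

theorem uvuv_eq (hA : (a : R) = 1 + U) (hB : (b : R) = 1 + V) (hU3 : U ^ 3 = 0)
    (hV3 : V ^ 3 = 0) (h1 : ((a * b : Rˣ) - 1 : R) ^ 3 = 0) :
    U * V * U * V =
      V ^ 2 * U ^ 2 - (U ^ 2 * V + U * V * U + U * V ^ 2 + V * U ^ 2 + V * U * V + V ^ 2 * U) := by
  have hA' := Units.val_inv_eq_of_pow_three_eq_zero hA hU3
  have hB' := Units.val_inv_eq_of_pow_three_eq_zero hB hV3
  have r := Units.val_inv_eq_of_pow_three_eq_zero (add_sub_cancel (1 : R) _).symm h1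
  simp only [mul_inv_rev, Units.val_mul, hA, hA', hB, hB'] at r
  linear_combination (norm := noncomm_ring) -r

theorem vu_sq_v_eq (hA : (a : R) = 1 + U) (hB : (b : R) = 1 + V) (hU3 : U ^ 3 = 0)
    (hV3 : V ^ 3 = 0) (hm1 : ((a⁻¹ * b : Rˣ) - 1 : R) ^ 3 = 0)
    (h1 : V * U * V = U * V * U - U * V ^ 2 + U ^ 2 * V - V ^ 2 * U + V * U ^ 2) :
    V * U ^ 2 * V = U * V ^ 2 * U := by
  have hA' := Units.val_inv_eq_of_pow_three_eq_zero hA hU3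
  have hB' := Units.val_inv_eq_of_pow_three_eq_zero hB hV3
  have m := Units.mul_inv_mul_sub_mul_inv_mul (x := a) (y := b)
    (Units.sub_one_pow_eq_zero_mul_comm hm1)
  simp only [hA, hA', hB, hB'] at m
  linear_combination (norm := noncomm_ring) m + h1

end CubicUnipotent

theorem cubic_unipotent_relations_basic_general (R : Type*) [Ring R]
    (h3 : IsUnit (3 : R)) (a b : Rˣ)
    (U V : R) (hU : U = (a : R) - 1) (hV : V = (b : R) - 1)
    (ha : ((a : R) - 1) ^ 3 = 0) (hb : ((b : R) - 1) ^ 3 = 0)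
    (hab : (((a * b : Rˣ) : R) - 1) ^ 3 = 0)
    (ha'b : (((a⁻¹ * b : Rˣ) : R) - 1) ^ 3 = 0)
    (ha2b : (((a ^ 2 * b : Rˣ) : R) - 1) ^ 3 = 0)
    (hab2 : (((a * b ^ 2 : Rˣ) : R) - 1) ^ 3 = 0) :
    V * U * V = U * V * U - U * V ^ 2 + U ^ 2 * V - V ^ 2 * U + V * U ^ 2 ∧
    U * V * U * V = -(2 * (U * V * U)) - 2 * (U ^ 2 * V) + V ^ 2 * U ^ 2 - 2 * (V * U ^ 2) ∧
    V * U * V * U = -(2 * (U * V * U)) + U ^ 2 * V ^ 2 - 2 * (U ^ 2 * V) - 2 * (V * U ^ 2) ∧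
    U * V ^ 2 * U = 2 * (U * V * U + U ^ 2 * V + V * U ^ 2) - U ^ 2 * V ^ 2 - V ^ 2 * U ^ 2 ∧
    V * U ^ 2 * V = U * V ^ 2 * U ∧
    U * V * U ^ 2 = -(U ^ 2 * V * U) ∧
    V * U * V ^ 2 = -(V ^ 2 * U * V) ∧
    U ^ 2 * V * U ^ 2 = 0 ∧
    V ^ 2 * U * V ^ 2 = 0 := by
  open CubicUnipotent in
  have hA : (a : R) = 1 + U := eq_add_of_sub_eq' hU.symm
  have hB : (b : R) = 1 + V := eq_add_of_sub_eq' hV.symm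
  have hU3 : U ^ 3 = 0 := hU ▸ ha
  have hV3 : V ^ 3 = 0 := hV ▸ hb
  have hba := Units.sub_one_pow_eq_zero_mul_comm hab
  have hb'a : ((b⁻¹ * a : Rˣ) - 1 : R) ^ 3 = 0 := by
    simpa using Units.sub_one_pow_eq_zero_inv ha'b
  have h6 := uvu_sq_eq_neg h3 hA hB hU3 hV3 hab ha'b ha2b
  have h7 := uvu_sq_eq_neg h3 hB hA hV3 hU3 hba hb'a (Units.sub_one_pow_eq_zero_mul_comm hab2)
  have h1 := vuv_eq hA hB hU3 hV3 ha'b h6 h7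
  have hUV := uvuv_eq hA hB hU3 hV3 hab
  have hVU := uvuv_eq hB hA hV3 hU3 hba
  refine ⟨h1, ?_, ?_, ?_, vu_sq_v_eq hA hB hU3 hV3 ha'b h1, h6, h7,
    u_sq_vu_sq_eq_zero hU3 h6, u_sq_vu_sq_eq_zero hV3 h7⟩
  · linear_combination (norm := noncomm_ring) hUV - h1
  · linear_combination (norm := noncomm_ring) hVU - h1
  · linear_combination (norm := noncomm_ring) U * h1 + h6 - hUV + h1 + hU3 * V

/-- Let `R` be an associative unital ring in which `2` and `3` are
invertible, and let `a, b` be units of `R` satisfying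
`(a-1)³ = (b-1)³ = (ab-1)³ = (a⁻¹b-1)³ = (a²b-1)³ = (ab²-1)³ = 0`.  Writing `U = a-1`,
`V = b-1`, the following relations hold:
`VUV = UVU - UV² + U²V - V²U + VU²`; `UVUV = -2UVU - 2U²V + V²U² - 2VU²`;
`VUVU = -2UVU + U²V² - 2U²V - 2VU²`; `UV²U = 2(UVU + U²V + VU²) - U²V² - V²U²`;
`VU²V = UV²U`; `UVU² = -U²VU`; `VUV² = -V²UV`; `U²VU² = 0`; `V²UV² = 0`. -/
theorem cubic_unipotent_relations_basic (R : Type*) [Ring R]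
    (h2 : IsUnit (2 : R)) (h3 : IsUnit (3 : R)) (a b : Rˣ)
    (U V : R) (hU : U = (a : R) - 1) (hV : V = (b : R) - 1)
    (ha : ((a : R) - 1) ^ 3 = 0) (hb : ((b : R) - 1) ^ 3 = 0)
    (hab : (((a * b : Rˣ) : R) - 1) ^ 3 = 0)
    (ha'b : (((a⁻¹ * b : Rˣ) : R) - 1) ^ 3 = 0)
    (ha2b : (((a ^ 2 * b : Rˣ) : R) - 1) ^ 3 = 0)
    (hab2 : (((a * b ^ 2 : Rˣ) : R) - 1) ^ 3 = 0) :
    V * U * V = U * V * U - U * V ^ 2 + U ^ 2 * V - V ^ 2 * U + V * U ^ 2 ∧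
    U * V * U * V = -(2 * (U * V * U)) - 2 * (U ^ 2 * V) + V ^ 2 * U ^ 2 - 2 * (V * U ^ 2) ∧
    V * U * V * U = -(2 * (U * V * U)) + U ^ 2 * V ^ 2 - 2 * (U ^ 2 * V) - 2 * (V * U ^ 2) ∧
    U * V ^ 2 * U = 2 * (U * V * U + U ^ 2 * V + V * U ^ 2) - U ^ 2 * V ^ 2 - V ^ 2 * U ^ 2 ∧
    V * U ^ 2 * V = U * V ^ 2 * U ∧
    U * V * U ^ 2 = -(U ^ 2 * V * U) ∧
    V * U * V ^ 2 = -(V ^ 2 * U * V) ∧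
    U ^ 2 * V * U ^ 2 = 0 ∧
    V ^ 2 * U * V ^ 2 = 0 :=
  cubic_unipotent_relations_basic_general R h3 a b U V hU hV ha hb hab ha'b ha2b hab2
end
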